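/- G has a proper colouring with 4 colours: there is a function c from the unit sphere to a 4-element set such that orthogonal unit vectors always receive different values. -/

import Mathlib

/-!
Replace each nonzero vector `x ∈ ℝⁿ⁺¹` by whichever of `±x` has positive first nonzero
coordinate, and colour it by the set of indices `k ≥ 1` at which that representative is
positive: `2ⁿ` colours. If two normalized vectors `x, y` get the same colour, every product
`xₖ yₖ` is nonnegative (for `k = 0` by the normalization, otherwise because `xₖ, yₖ` lie on the
same side of `0`), and the product at the first nonzero coordinate of `x` or of `y` is positive,
so `⟪x, y⟫ > 0`.
-/

open scoped RealInnerProductSpace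

variable {n : ℕ}

noncomputable def positiveTail (x : Fin (n + 1) → ℝ) : Finset (Fin n) := {k | 0 < x k.succ}

lemma mul_nonneg_of_pos_iff_pos {a b : ℝ} (h : 0 < a ↔ 0 < b) : 0 ≤ a * b := by
  by_cases ha : 0 < a
  · exact (mul_pos ha (h.1 ha)).le
  · exact mul_nonneg_of_nonpos_of_nonpos (not_lt.1 ha) (not_lt.1 (mt h.2 ha))

lemma apply_zero_nonneg_of_toLex_pos {x : Fin (n + 1) → ℝ} (hx : 0 < toLex x) : 0 ≤ x 0 := by
  obtain ⟨i, hbefore, hi⟩ := hx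
  rcases Fin.eq_zero_or_eq_succ i with rfl | ⟨k, rfl⟩
  · exact hi.le
  · exact (hbefore 0 (Fin.succ_pos k)).le

theorem dotProduct_pos_of_positiveTail_eq {x y : Fin (n + 1) → ℝ} (hx : 0 < toLex x)
    (hy : 0 < toLex y) (hxy : positiveTail x = positiveTail y) : 0 < x ⬝ᵥ y := by
  have tail_iff (k : Fin n) : 0 < x k.succ ↔ 0 < y k.succ := by
    simpa [positiveTail] using Finset.ext_iff.1 hxy k
  refine Finset.sum_pos' (fun i _ => ?_) ?_
  · cases i using Fin.cases with
    | zero =>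
      exact mul_nonneg (apply_zero_nonneg_of_toLex_pos hx) (apply_zero_nonneg_of_toLex_pos hy)
    | succ k => exact mul_nonneg_of_pos_iff_pos (tail_iff k)
  obtain ⟨i, -, hi⟩ := hx
  obtain ⟨j, -, hj⟩ := hy
  rcases Fin.eq_zero_or_eq_succ i with rfl | ⟨k, rfl⟩
  · rcases Fin.eq_zero_or_eq_succ j with rfl | ⟨k, rfl⟩
    · exact ⟨0, Finset.mem_univ _, mul_pos hi hj⟩
    · exact ⟨k.succ, Finset.mem_univ _, mul_pos ((tail_iff k).2 hj) hj⟩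
  · exact ⟨k.succ, Finset.mem_univ _, mul_pos hi ((tail_iff k).1 hi)⟩

-- `ofLex |toLex x|` is the one of `±x` whose first nonzero coordinate is positive.
lemma lexAbs_dotProduct_lexAbs_eq_zero {x y : Fin (n + 1) → ℝ} (h : x ⬝ᵥ y = 0) :
    ofLex |toLex x| ⬝ᵥ ofLex |toLex y| = 0 := by
  rcases abs_choice (toLex x) with hx | hx <;> rcases abs_choice (toLex y) with hy | hy <;>
    simp [hx, hy, h]

theorem positiveTail_lexAbs_ne {x y : Fin (n + 1) → ℝ} (hx : x ≠ 0) (hy : y ≠ 0)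
    (h : x ⬝ᵥ y = 0) : positiveTail (ofLex |toLex x|) ≠ positiveTail (ofLex |toLex y|) := by
  intro heq
  exact (dotProduct_pos_of_positiveTail_eq (abs_pos.2 (by simpa using hx))
    (abs_pos.2 (by simpa using hy)) heq).ne' (lexAbs_dotProduct_lexAbs_eq_zero h)

theorem exists_orthogonality_colouring (n : ℕ) :
    ∃ c : EuclideanSpace ℝ (Fin (n + 1)) → Finset (Fin n),
      ∀ x y, x ≠ 0 → y ≠ 0 → ⟪x, y⟫ = 0 → c x ≠ c y := by
  refine ⟨fun x => positiveTail (ofLex |toLex (WithLp.ofLp x)|), fun x y hx hy h => ?_⟩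
  refine positiveTail_lexAbs_ne (by simpa using hx) (by simpa using hy) ?_
  rwa [EuclideanSpace.inner_eq_star_dotProduct, star_trivial, dotProduct_comm] at h

theorem sphere_four_colouring :
    ∃ c : {x : EuclideanSpace ℝ (Fin 3) // ‖x‖ = 1} → Fin 4,
      ∀ u v : {x : EuclideanSpace ℝ (Fin 3) // ‖x‖ = 1},
        ⟪(u : EuclideanSpace ℝ (Fin 3)), (v : EuclideanSpace ℝ (Fin 3))⟫ = 0 →
          c u ≠ c v := by
  obtain ⟨c, hc⟩ := exists_orthogonality_colouring 2
  let e : Finset (Fin 2) ≃ Fin 4 := Fintype.equivFinOfCardEq (by simp)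
  have unit_ne_zero (u : {x : EuclideanSpace ℝ (Fin 3) // ‖x‖ = 1}) : u.1 ≠ 0 :=
    norm_ne_zero_iff.1 (by simp [u.2])
  exact ⟨fun u => e (c u), fun u v h =>
    e.injective.ne (hc u v (unit_ne_zero u) (unit_ne_zero v) h)⟩
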